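/- Let U be a Banach space and K ⊆ U a set with radius R = sup_{u∈K} ‖u‖ < ∞. Define the decoder width d^Deco_{n,l}(K) = inf over l-Lipschitz maps D : ℝⁿ → U of sup_{u∈K} inf_{‖z‖₂≤1} ‖u − D(z)‖, and the stable manifold width d^SMani_{n,l}(K) = inf over pairs of l-Lipschitz maps E : U → ℝⁿ, D : ℝⁿ → U of sup_{u∈K} ‖u − D(E(u))‖. Then d^Deco_{n,l²R}(K) ≤ d^SMani_{n,l}(K). -/

import Mathlib

open Metric

variable {U : Type*} [NormedAddCommGroup U] [NormedSpace ℝ U] [CompleteSpace U]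

/-- Worst-case approximation error of a decoder `D` on the set `K`:
`sup_{u ∈ K} inf_{‖z‖ ≤ 1} ‖u - D z‖`. -/
noncomputable def decErr {n : ℕ} (D : EuclideanSpace ℝ (Fin n) → U) (K : Set U) : ℝ :=
  sSup ((fun u => infDist u (D '' closedBall (0 : EuclideanSpace ℝ (Fin n)) 1)) '' K)

/-- The decoder width `d^Deco_{n,l}(K)`. -/
noncomputable def decWidth (n : ℕ) (l : NNReal) (K : Set U) : ℝ :=
  sInf { e | ∃ D : EuclideanSpace ℝ (Fin n) → U, LipschitzWith l D ∧ e = decErr D K }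

/-- The stable manifold width `d^SMani_{n,l}(K)`. -/
noncomputable def sManiWidth (n : ℕ) (l : NNReal) (K : Set U) : ℝ :=
  sInf { e | ∃ (E : U → EuclideanSpace ℝ (Fin n)) (D : EuclideanSpace ℝ (Fin n) → U),
    LipschitzWith l E ∧ LipschitzWith l D ∧
    e = sSup ((fun u => ‖u - D (E u)‖) '' K) }

section General

variable {V W : Type*} [NormedAddCommGroup V] [NormedAddCommGroup W] [NormedSpace ℝ W]

theorem LipschitzWith.comp_affinity {l : NNReal} {D : W → V} (hD : LipschitzWith l D)
    (c : W) (a : NNReal) : LipschitzWith (l * a) fun z => D (c + (a : ℝ) • z) := by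
  have haff : LipschitzWith a fun z : W => c + (a : ℝ) • z :=
    LipschitzWith.of_dist_le_mul fun x y => by
      simp [dist_eq_norm, ← smul_sub, norm_smul]
  exact hD.comp haff

theorem image_affinity_unitClosedBall (c : W) {a : ℝ} (ha : 0 ≤ a) :
    (fun z => c + a • z) '' closedBall (0 : W) 1 = closedBall c a := by
  rw [← affinity_unitClosedBall ha, ← Set.image_smul, ← Set.image_vadd, Set.image_image]
  rfl

theorem bddAbove_norm_sub_image {l : NNReal} {f : V → V} (hf : LipschitzWith l f) {K : Set V}
    (hK : Bornology.IsBounded K) : BddAbove ((fun u => ‖u - f u‖) '' K) :=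
  ((lipschitzWith_one_norm.comp (LipschitzWith.id.sub hf)).isBounded_image hK).bddAbove

end General

section Widths

variable {V : Type*} [NormedAddCommGroup V] {n : ℕ}

theorem decErr_nonneg (D : EuclideanSpace ℝ (Fin n) → V) (K : Set V) : 0 ≤ decErr D K :=
  Real.sSup_nonneg <| Set.forall_mem_image.2 fun _ _ => infDist_nonneg

theorem decWidth_le_decErr {l : NNReal} {D : EuclideanSpace ℝ (Fin n) → V}
    (hD : LipschitzWith l D) (K : Set V) : decWidth n l K ≤ decErr D K :=
  csInf_le ⟨0, by rintro _ ⟨D', -, rfl⟩; exact decErr_nonneg D' K⟩ ⟨D, hD, rfl⟩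

theorem decErr_le_of_mem_image {D : EuclideanSpace ℝ (Fin n) → V} {K : Set V} {G : V → V}
    (hG : ∀ u ∈ K, G u ∈ D '' closedBall 0 1) (hb : BddAbove ((fun u => ‖u - G u‖) '' K)) :
    decErr D K ≤ sSup ((fun u => ‖u - G u‖) '' K) := by
  refine Real.sSup_le (Set.forall_mem_image.2 fun u hu => ?_)
    (Real.sSup_nonneg <| Set.forall_mem_image.2 fun _ _ => norm_nonneg _)
  calc infDist u (D '' closedBall 0 1) ≤ dist u (G u) := infDist_le_dist_of_mem (hG u hu)
    _ = ‖u - G u‖ := dist_eq_norm _ _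
    _ ≤ _ := le_csSup hb ⟨u, hu, rfl⟩

/-- Rescaling the latent space by `lE * R` turns the decoder `D` of an autoencoder `D ∘ E`
into a decoder on the unit ball, since `E` maps `K ⊆ closedBall 0 R` into
`closedBall (E 0) (lE * R)`. -/
theorem decWidth_le_sSup_norm_sub_comp {lE lD R : NNReal}
    {E : V → EuclideanSpace ℝ (Fin n)} {D : EuclideanSpace ℝ (Fin n) → V}
    (hE : LipschitzWith lE E) (hD : LipschitzWith lD D) {K : Set V}
    (hK : K ⊆ closedBall 0 R) :
    decWidth n (lD * (lE * R)) K ≤ sSup ((fun u => ‖u - D (E u)‖) '' K) := by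
  have hG : ∀ u ∈ K, D (E u) ∈ (fun z => D (E 0 + ((lE * R : NNReal) : ℝ) • z)) ''
      closedBall 0 1 := by
    intro u hu
    rw [← Set.image_image D, image_affinity_unitClosedBall _ (NNReal.coe_nonneg _),
      NNReal.coe_mul]
    exact Set.mem_image_of_mem D (hE.mapsTo_closedBall 0 R (hK hu))
  calc decWidth n (lD * (lE * R)) K
      ≤ decErr (fun z => D (E 0 + ((lE * R : NNReal) : ℝ) • z)) K :=
        decWidth_le_decErr (hD.comp_affinity _ _) K
    _ ≤ _ := decErr_le_of_mem_image hG
        (bddAbove_norm_sub_image (hD.comp hE) (isBounded_closedBall.subset hK))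

end Widths

theorem decWidth_le_sManiWidth_general (n : ℕ) (l : NNReal) (K : Set U)
    (R : NNReal)
    (hbdd : BddAbove ((fun u => ‖u‖₊) '' K))
    (hR : R = sSup ((fun u => ‖u‖₊) '' K)) :
    decWidth n (l ^ 2 * R) K ≤ sManiWidth n l K := by
  have hKR : K ⊆ closedBall 0 R := fun u hu => by
    rw [mem_closedBall_zero_iff, ← coe_nnnorm, NNReal.coe_le_coe, hR]
    exact le_csSup hbdd ⟨u, hu, rfl⟩
  refine le_csInf ⟨_, fun _ => 0, fun _ => 0, .const' 0, .const' 0, rfl⟩ ?_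
  rintro _ ⟨E, D, hE, hD, rfl⟩
  rw [sq, mul_assoc]
  exact decWidth_le_sSup_norm_sub_comp hE hD hKR

theorem decWidth_le_sManiWidth (n : ℕ) (l : NNReal) (K : Set U) (hK : K.Nonempty)
    (R : NNReal) (hRpos : 0 < R)
    (hbdd : BddAbove ((fun u => ‖u‖₊) '' K))
    (hR : R = sSup ((fun u => ‖u‖₊) '' K)) :
    decWidth n (l ^ 2 * R) K ≤ sManiWidth n l K :=
  decWidth_le_sManiWidth_general n l K R hbdd hR
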